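/- Let K be a field of characteristic 2, A = K[x^{±1}, y^{±1}], U the 2×2 matrix over A with rows (0, 1) and (y, 0), and V the 2×2 matrix with rows (1, x⁻¹y⁻¹) and (x⁻¹, 1). If F ∈ M₂(A) satisfies tr(VF) = 0 and at(VF) = 0, then tr(F) = 0 and at(F) = 0, and consequently UF = FU. -/

import Mathlib

/-!
Write `t = tr F`, `s = at F`, `m = x⁻¹y⁻¹` and `n = x⁻¹`. Since `m y = n`, multiplying by `V`
acts on the pair `(t, s)` by `tr (VF) = t + m s` and `at (VF) = s + n t`, so the hypotheses
give `t = m n t`. As `m n = x⁻²y⁻¹ ≠ 1` and `A` is a domain, `t = s = 0`. In characteristic 2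
this says `a = d` and `c = y b`, which is exactly `UF = FU`.
-/

noncomputable section

/-- The Laurent polynomial ring `K[x^{±1}, y^{±1}]`. -/
abbrev LaurentTwo (K : Type*) [Field K] := AddMonoidAlgebra K (ℤ × ℤ)

/-- The monomial `x^i y^j` in `K[x^{±1}, y^{±1}]`. -/
def mon (K : Type*) [Field K] (i j : ℤ) : LaurentTwo K := AddMonoidAlgebra.single (i, j) 1

/-- The matrix `U = [[0, 1], [y, 0]]`. -/
def Umat (K : Type*) [Field K] : Matrix (Fin 2) (Fin 2) (LaurentTwo K) :=
  !![0, 1; mon K 0 1, 0]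

/-- The matrix `V = [[1, x⁻¹y⁻¹], [x⁻¹, 1]]`. -/
def Vmat (K : Type*) [Field K] : Matrix (Fin 2) (Fin 2) (LaurentTwo K) :=
  !![1, mon K (-1) (-1); mon K (-1) 0, 1]

/-- `tr(F) = a + d` for `F = [[a,b],[c,d]]`. -/
def trF {K : Type*} [Field K] (F : Matrix (Fin 2) (Fin 2) (LaurentTwo K)) : LaurentTwo K :=
  F 0 0 + F 1 1

/-- `at(F) = yb + c` for `F = [[a,b],[c,d]]`. -/
def atF {K : Type*} [Field K] (F : Matrix (Fin 2) (Fin 2) (LaurentTwo K)) : LaurentTwo K :=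
  mon K 0 1 * F 0 1 + F 1 0

lemma mon_mul_mon (K : Type*) [Field K] (i j k l : ℤ) :
    mon K i j * mon K k l = mon K (i + k) (j + l) := by
  simp [mon, AddMonoidAlgebra.single_mul_single]

lemma mon_ne_one (K : Type*) [Field K] {i j : ℤ} (h : (i, j) ≠ (0, 0)) : mon K i j ≠ 1 :=
  (AddMonoidAlgebra.single_left_inj one_ne_zero).not.mpr h

lemma trF_Vmat_mul {K : Type*} [Field K] (F : Matrix (Fin 2) (Fin 2) (LaurentTwo K)) :
    trF (Vmat K * F) = trF F + mon K (-1) (-1) * atF F := by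
  have hmy : mon K (-1) (-1) * mon K 0 1 = mon K (-1) 0 := by simp [mon_mul_mon]
  simp only [trF, atF, Vmat, Matrix.mul_apply, Fin.sum_univ_two, Matrix.of_apply,
    Matrix.cons_val', Matrix.cons_val_zero, Matrix.cons_val_one, Matrix.empty_val',
    Matrix.cons_val_fin_one]
  linear_combination -F 0 1 * hmy

lemma atF_Vmat_mul {K : Type*} [Field K] (F : Matrix (Fin 2) (Fin 2) (LaurentTwo K)) :
    atF (Vmat K * F) = atF F + mon K (-1) 0 * trF F := by
  have hmy : mon K 0 1 * mon K (-1) (-1) = mon K (-1) 0 := by simp [mon_mul_mon]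
  simp only [trF, atF, Vmat, Matrix.mul_apply, Fin.sum_univ_two, Matrix.of_apply,
    Matrix.cons_val', Matrix.cons_val_zero, Matrix.cons_val_one, Matrix.empty_val',
    Matrix.cons_val_fin_one]
  linear_combination F 1 1 * hmy

lemma eq_zero_of_add_mul_eq_zero {R : Type*} [CommRing R] [NoZeroDivisors R] {t s m n : R}
    (hmn : m * n ≠ 1) (ht : t + m * s = 0) (hs : s + n * t = 0) : t = 0 ∧ s = 0 := by
  have hfix : t * (1 - m * n) = 0 := by linear_combination ht - m * hs
  have ht0 : t = 0 := (mul_eq_zero.1 hfix).resolve_right (sub_ne_zero.2 hmn.symm)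
  exact ⟨ht0, by linear_combination hs - n * ht0⟩

lemma commute_of_add_eq_zero {R : Type*} [CommRing R] [CharP R 2] (y : R)
    (F : Matrix (Fin 2) (Fin 2) R) (ht : F 0 0 + F 1 1 = 0) (hs : y * F 0 1 + F 1 0 = 0) :
    !![0, 1; y, 0] * F = F * !![0, 1; y, 0] := by
  rw [CharTwo.add_eq_zero] at ht hs
  ext i j
  fin_cases i <;> fin_cases j <;> simp [Matrix.mul_apply, Fin.sum_univ_two, ht, hs, mul_comm]

/-- If `tr(VF) = 0` and `at(VF) = 0`, then `tr(F) = 0` and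
`at(F) = 0`, and consequently `UF = FU`. -/
theorem trat_VF_zero (K : Type*) [Field K] [CharP K 2]
    (F : Matrix (Fin 2) (Fin 2) (LaurentTwo K))
    (htr : trF (Vmat K * F) = 0) (hat : atF (Vmat K * F) = 0) :
    trF F = 0 ∧ atF F = 0 ∧ Umat K * F = F * Umat K := by
  have hmn : mon K (-1) (-1) * mon K (-1) 0 ≠ 1 := by
    rw [mon_mul_mon]
    exact mon_ne_one K (by decide)
  rw [trF_Vmat_mul] at htr
  rw [atF_Vmat_mul] at hat
  obtain ⟨ht, hs⟩ := eq_zero_of_add_mul_eq_zero hmn htr hat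
  have : CharP (LaurentTwo K) 2 :=
    charP_of_injective_algebraMap (algebraMap K (LaurentTwo K)).injective 2
  exact ⟨ht, hs, commute_of_add_eq_zero _ F ht hs⟩

end
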